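/- Let μ > 0, ν ≥ 0, and let Z, S, C, X be fixed real m × n matrices. Define Q = (1/(ν+1))(Z - S + νC - X). Then the singular value thresholding operator D_{1/(μ(ν+1))}(Q) minimizes over L the function (1/μ)‖L‖_* + (1/2)‖L + S - Z + X‖_F² + (ν/2)‖L - C‖_F². -/

import Mathlib

open Matrix BigOperators

noncomputable def singVal {m n : ℕ} (M : Matrix (Fin m) (Fin n) ℝ) (i : Fin n) : ℝ :=
  Real.sqrt ((show (Mᵀ * M).IsHermitian by
    simpa using Matrix.isHermitian_conjTranspose_mul_self M).eigenvalues i)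

noncomputable def nuclearNorm {m n : ℕ} (M : Matrix (Fin m) (Fin n) ℝ) : ℝ :=
  ∑ i, singVal M i

noncomputable def frobNorm {m n : ℕ} (M : Matrix (Fin m) (Fin n) ℝ) : ℝ :=
  Real.sqrt (Matrix.trace (Mᵀ * M))

noncomputable def finner {m n : ℕ} (A B : Matrix (Fin m) (Fin n) ℝ) : ℝ :=
  Matrix.trace (Aᵀ * B)

noncomputable def opNorm {m n : ℕ} (M : Matrix (Fin m) (Fin n) ℝ) : ℝ :=
  ‖LinearMap.toContinuousLinearMap (Matrix.toEuclideanLin M)‖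

/-!
With `τ = 1 / (μ (ν + 1))` and `(ν + 1) Q = (Z - S - X) + ν C`, the quadratic part of the
objective is `(ν + 1) / 2 ‖L - Q‖_F²` up to a constant, so it suffices that `D = D_τ(Q)`
minimises `τ ‖L‖_* + ½ ‖L - Q‖_F²`. Splitting `σ = min(τ, σ) + max(σ - τ, 0)` gives
`Q - D = U diag(min(τ, σ)) Vᵀ`, a matrix of operator norm at most `τ` with
`⟨Q - D, D⟩_F = τ Σ max(σ - τ, 0) ≥ τ ‖D‖_*`. Trace duality `⟨G, L⟩_F ≤ ‖G‖_op ‖L‖_*` then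
yields `⟨Q - D, L - D⟩_F ≤ τ (‖L‖_* - ‖D‖_*)`, and expanding `‖(L - D) + (D - Q)‖_F²` concludes.
Trace duality comes from computing the trace in the eigenbasis of `Lᵀ L`; its equality case,
attained by the polar factor of `D`, gives `‖U diag(b) Vᵀ‖_* ≤ Σ b` for `b ≥ 0`.
-/

open scoped InnerProductSpace

section FrobeniusInner

variable {m n : ℕ}

lemma finner_eq_sum (A B : Matrix (Fin m) (Fin n) ℝ) :
    finner A B = ∑ i, ∑ j, A i j * B i j := by
  simp only [finner, trace, diag, mul_apply, transpose_apply]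
  exact Finset.sum_comm

lemma frobNorm_sq (A : Matrix (Fin m) (Fin n) ℝ) : frobNorm A ^ 2 = ∑ i, ∑ j, A i j ^ 2 := by
  have h := finner_eq_sum A A
  simp only [← sq] at h
  rw [frobNorm, ← finner, h, Real.sq_sqrt (by positivity)]

lemma frobNorm_sub_sq (L D Q : Matrix (Fin m) (Fin n) ℝ) :
    frobNorm (L - Q) ^ 2
      = frobNorm (D - Q) ^ 2 + frobNorm (L - D) ^ 2
        + 2 * (finner (Q - D) D - finner (Q - D) L) := by
  simp only [frobNorm_sq, finner_eq_sum, Matrix.sub_apply, Finset.mul_sum, ← Finset.sum_add_distrib,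
    ← Finset.sum_sub_distrib]
  exact Finset.sum_congr rfl fun i _ => Finset.sum_congr rfl fun j _ => by ring

lemma frobNorm_sub_sq_add_mul_frobNorm_sub_sq {A C Q : Matrix (Fin m) (Fin n) ℝ} {ν : ℝ}
    (hQ : (ν + 1) • Q = A + ν • C) (L : Matrix (Fin m) (Fin n) ℝ) :
    frobNorm (L - A) ^ 2 + ν * frobNorm (L - C) ^ 2
      = (ν + 1) * frobNorm (L - Q) ^ 2
        + (frobNorm A ^ 2 + ν * frobNorm C ^ 2 - (ν + 1) * frobNorm Q ^ 2) := by
  simp only [frobNorm_sq, Matrix.sub_apply, Finset.mul_sum, ← Finset.sum_add_distrib,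
    ← Finset.sum_sub_distrib]
  refine Finset.sum_congr rfl fun i _ => Finset.sum_congr rfl fun j _ => ?_
  have hij : (ν + 1) * Q i j = A i j + ν * C i j := by
    simpa using congrFun (congrFun hQ i) j
  linear_combination (2 * L i j) * hij

end FrobeniusInner

section EuclideanView

variable {m n : ℕ}

lemma inner_toEuclideanLin_toEuclideanLin (A B : Matrix (Fin m) (Fin n) ℝ)
    (x y : EuclideanSpace ℝ (Fin n)) :
    ⟪A.toEuclideanLin x, B.toEuclideanLin y⟫_ℝ = ⟪x, (Aᵀ * B).toEuclideanLin y⟫_ℝ := by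
  simp only [EuclideanSpace.inner_eq_star_dotProduct, toLpLin_apply, star_trivial, ← mulVec_mulVec]
  rw [dotProduct_mulVec, ← mulVec_transpose]

lemma finner_eq_sum_inner {ι : Type*} [Fintype ι] (A B : Matrix (Fin m) (Fin n) ℝ)
    (b : OrthonormalBasis ι ℝ (EuclideanSpace ℝ (Fin n))) :
    finner A B = ∑ i, ⟪A.toEuclideanLin (b i), B.toEuclideanLin (b i)⟫_ℝ := by
  rw [finner, ← Matrix.trace_toLin_eq _ (EuclideanSpace.basisFun (Fin n) ℝ).toBasis,
    ← toEuclideanLin_eq_toLin_orthonormal, LinearMap.trace_eq_sum_inner _ b]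
  simp only [inner_toEuclideanLin_toEuclideanLin]

lemma Matrix.IsHermitian.inner_eigenvectorBasis_toEuclideanLin {M : Matrix (Fin n) (Fin n) ℝ}
    (hM : M.IsHermitian) (i j : Fin n) :
    ⟪hM.eigenvectorBasis i, M.toEuclideanLin (hM.eigenvectorBasis j)⟫_ℝ
      = if i = j then hM.eigenvalues i else 0 := by
  have hj :
      M.toEuclideanLin (hM.eigenvectorBasis j) = hM.eigenvalues j • hM.eigenvectorBasis j := by
    rw [toLpLin_apply, hM.mulVec_eigenvectorBasis]
    rfl
  rw [hj, inner_smul_right, OrthonormalBasis.inner_eq_ite]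
  split_ifs with h <;> simp [h]

lemma isHermitian_transpose_mul_self (M : Matrix (Fin m) (Fin n) ℝ) : (Mᵀ * M).IsHermitian := by
  simpa using isHermitian_conjTranspose_mul_self M

noncomputable abbrev rightSingVec (M : Matrix (Fin m) (Fin n) ℝ) :
    OrthonormalBasis (Fin n) ℝ (EuclideanSpace ℝ (Fin n)) :=
  (isHermitian_transpose_mul_self M).eigenvectorBasis

lemma inner_toEuclideanLin_rightSingVec (M : Matrix (Fin m) (Fin n) ℝ) (i j : Fin n) :
    ⟪M.toEuclideanLin (rightSingVec M i), M.toEuclideanLin (rightSingVec M j)⟫_ℝ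
      = if i = j then (isHermitian_transpose_mul_self M).eigenvalues i else 0 := by
  rw [inner_toEuclideanLin_toEuclideanLin,
    (isHermitian_transpose_mul_self M).inner_eigenvectorBasis_toEuclideanLin]

lemma singVal_eq_norm (M : Matrix (Fin m) (Fin n) ℝ) (j : Fin n) :
    singVal M j = ‖M.toEuclideanLin (rightSingVec M j)‖ := by
  rw [norm_eq_sqrt_real_inner, inner_toEuclideanLin_rightSingVec, if_pos rfl]
  rfl

end EuclideanView

section OperatorNorm

variable {m n r : ℕ}

lemma norm_toEuclideanLin_le (M : Matrix (Fin m) (Fin n) ℝ) (x : EuclideanSpace ℝ (Fin n)) :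
    ‖M.toEuclideanLin x‖ ≤ opNorm M * ‖x‖ :=
  (LinearMap.toContinuousLinearMap M.toEuclideanLin).le_opNorm x

lemma opNorm_le_of_norm_le (M : Matrix (Fin m) (Fin n) ℝ) {c : ℝ} (hc : 0 ≤ c)
    (h : ∀ x, ‖M.toEuclideanLin x‖ ≤ c * ‖x‖) : opNorm M ≤ c :=
  ContinuousLinearMap.opNorm_le_bound _ hc h

lemma opNorm_nonneg (M : Matrix (Fin m) (Fin n) ℝ) : 0 ≤ opNorm M := norm_nonneg _

lemma opNorm_transpose (M : Matrix (Fin m) (Fin n) ℝ) : opNorm Mᵀ = opNorm M := by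
  rw [opNorm, opNorm, ← conjTranspose_eq_transpose_of_trivial,
    toEuclideanLin_conjTranspose_eq_adjoint, LinearMap.adjoint_toContinuousLinearMap,
    LinearIsometryEquiv.norm_map]

lemma opNorm_mul_le {p : ℕ} (A : Matrix (Fin m) (Fin n) ℝ) (B : Matrix (Fin n) (Fin p) ℝ) :
    opNorm (A * B) ≤ opNorm A * opNorm B := by
  refine opNorm_le_of_norm_le _ (mul_nonneg (opNorm_nonneg A) (opNorm_nonneg B)) fun x => ?_
  have hAB : (A * B).toEuclideanLin x = A.toEuclideanLin (B.toEuclideanLin x) := by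
    simp only [toLpLin_apply, mulVec_mulVec]
  rw [hAB, mul_assoc]
  exact (norm_toEuclideanLin_le A _).trans
    (mul_le_mul_of_nonneg_left (norm_toEuclideanLin_le B x) (opNorm_nonneg A))

lemma opNorm_le_one_of_transpose_mul_self {U : Matrix (Fin m) (Fin r) ℝ}
    (hU : Uᵀ * U = 1) : opNorm U ≤ 1 := by
  refine opNorm_le_of_norm_le _ zero_le_one fun x => le_of_eq ?_
  rw [one_mul, norm_eq_sqrt_real_inner, norm_eq_sqrt_real_inner,
    inner_toEuclideanLin_toEuclideanLin, hU, toLpLin_one, LinearMap.id_apply]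

lemma opNorm_transpose_le_one_of_transpose_mul_self {U : Matrix (Fin m) (Fin r) ℝ}
    (hU : Uᵀ * U = 1) : opNorm Uᵀ ≤ 1 :=
  opNorm_transpose U ▸ opNorm_le_one_of_transpose_mul_self hU

lemma opNorm_mul_mul_le_of_opNorm_le_one {p q : ℕ} {A : Matrix (Fin m) (Fin p) ℝ}
    (B : Matrix (Fin p) (Fin q) ℝ) {C : Matrix (Fin q) (Fin n) ℝ} (hA : opNorm A ≤ 1)
    (hC : opNorm C ≤ 1) : opNorm (A * B * C) ≤ opNorm B :=
  calc opNorm (A * B * C) ≤ opNorm A * opNorm B * opNorm C :=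
        (opNorm_mul_le _ _).trans (mul_le_mul_of_nonneg_right (opNorm_mul_le _ _) (opNorm_nonneg _))
    _ ≤ 1 * opNorm B * 1 :=
        mul_le_mul (mul_le_mul_of_nonneg_right hA (opNorm_nonneg B)) hC (opNorm_nonneg C)
          (mul_nonneg zero_le_one (opNorm_nonneg B))
    _ = opNorm B := by ring

lemma opNorm_diagonal_le {a : Fin r → ℝ} {τ : ℝ} (hτ : 0 ≤ τ) (ha : ∀ i, |a i| ≤ τ) :
    opNorm (diagonal a) ≤ τ := by
  refine opNorm_le_of_norm_le _ hτ fun x => ?_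
  refine (pow_le_pow_iff_left₀ (norm_nonneg _) (by positivity) two_ne_zero).mp ?_
  rw [mul_pow, EuclideanSpace.real_norm_sq_eq, EuclideanSpace.real_norm_sq_eq, Finset.mul_sum]
  refine Finset.sum_le_sum fun i _ => ?_
  simp only [toLpLin_apply, mulVec_diagonal, PiLp.toLp_apply]
  rw [mul_pow]
  exact mul_le_mul_of_nonneg_right (sq_le_sq' (abs_le.mp (ha i)).1 (abs_le.mp (ha i)).2)
    (sq_nonneg _)

lemma diag_le_opNorm (M : Matrix (Fin n) (Fin n) ℝ) (k : Fin n) : M k k ≤ opNorm M := by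
  have hk : M k k
      = ⟪EuclideanSpace.single k 1, M.toEuclideanLin (EuclideanSpace.single k 1)⟫_ℝ := by
    simp [toLpLin_apply, EuclideanSpace.inner_single_left]
  calc M k k ≤ ‖EuclideanSpace.single k (1 : ℝ)‖
        * ‖M.toEuclideanLin (EuclideanSpace.single k 1)‖ := hk ▸ real_inner_le_norm _ _
    _ ≤ opNorm M := by
        simpa using norm_toEuclideanLin_le M (EuclideanSpace.single k 1)

end OperatorNorm

lemma norm_sum_smul_sq_of_pairwise_inner_eq_zero {E ι : Type*} [NormedAddCommGroup E]
    [InnerProductSpace ℝ E] [Fintype ι] {u : ι → E}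
    (hu : Pairwise fun i j => ⟪u i, u j⟫_ℝ = 0) (c : ι → ℝ) :
    ‖∑ i, c i • u i‖ ^ 2 = ∑ i, c i ^ 2 * ‖u i‖ ^ 2 := by
  rw [← real_inner_self_eq_norm_sq, sum_inner]
  refine Finset.sum_congr rfl fun i _ => ?_
  rw [inner_sum, Finset.sum_eq_single i (fun j _ hji => by
    rw [real_inner_smul_left, real_inner_smul_right, hu hji.symm, mul_zero, mul_zero])
    (by simp), real_inner_smul_left, real_inner_smul_right, real_inner_self_eq_norm_sq]
  ring

section Duality

variable {m n : ℕ}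

lemma singVal_nonneg (M : Matrix (Fin m) (Fin n) ℝ) (j : Fin n) : 0 ≤ singVal M j :=
  Real.sqrt_nonneg _

lemma nuclearNorm_nonneg (M : Matrix (Fin m) (Fin n) ℝ) : 0 ≤ nuclearNorm M :=
  Finset.sum_nonneg fun j _ => singVal_nonneg M j

theorem finner_le_opNorm_mul_nuclearNorm (G L : Matrix (Fin m) (Fin n) ℝ) :
    finner G L ≤ opNorm G * nuclearNorm L := by
  rw [finner_eq_sum_inner G L (rightSingVec L), nuclearNorm, Finset.mul_sum]
  refine Finset.sum_le_sum fun j _ => ?_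
  calc _ ≤ ‖G.toEuclideanLin (rightSingVec L j)‖ * ‖L.toEuclideanLin (rightSingVec L j)‖ :=
        real_inner_le_norm _ _
    _ ≤ opNorm G * singVal L j := by
        rw [singVal_eq_norm]
        gcongr
        simpa using norm_toEuclideanLin_le G (rightSingVec L j)

theorem exists_opNorm_le_one_finner_eq_nuclearNorm (D : Matrix (Fin m) (Fin n) ℝ) :
    ∃ P : Matrix (Fin m) (Fin n) ℝ, opNorm P ≤ 1 ∧ finner P D = nuclearNorm D := by
  let u : Fin n → EuclideanSpace ℝ (Fin m) := fun j =>
    (singVal D j)⁻¹ • D.toEuclideanLin (rightSingVec D j)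
  have hu_orth : Pairwise fun i j => ⟪u i, u j⟫_ℝ = 0 := fun i j hij => by
    simp only [u, real_inner_smul_left, real_inner_smul_right, inner_toEuclideanLin_rightSingVec,
      if_neg hij, mul_zero]
  have hu_norm (j : Fin n) : ‖u j‖ ≤ 1 := by
    rw [norm_smul, ← singVal_eq_norm, Real.norm_eq_abs, abs_inv, abs_of_nonneg (singVal_nonneg D j)]
    exact inv_mul_le_one_of_le₀ le_rfl (singVal_nonneg D j)
  -- the polar factor of `D`: `w_j ↦ D w_j / s_j`, and `w_j ↦ 0` when `s_j = 0` since `0⁻¹ = 0`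
  let T : EuclideanSpace ℝ (Fin n) →L[ℝ] EuclideanSpace ℝ (Fin m) :=
    ∑ j, (innerSL ℝ (rightSingVec D j)).smulRight (u j)
  have hT (y : EuclideanSpace ℝ (Fin n)) : T y = ∑ j, ⟪rightSingVec D j, y⟫_ℝ • u j := by
    simp [T]
  refine ⟨toEuclideanLin.symm T.toLinearMap, ?_, ?_⟩
  · refine opNorm_le_of_norm_le _ zero_le_one fun y => ?_
    rw [LinearEquiv.apply_symm_apply, ContinuousLinearMap.coe_coe, hT, one_mul]
    refine (pow_le_pow_iff_left₀ (norm_nonneg _) (norm_nonneg _) two_ne_zero).mp ?_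
    rw [norm_sum_smul_sq_of_pairwise_inner_eq_zero hu_orth, ← (rightSingVec D).sum_sq_inner_right y]
    gcongr with j
    exact mul_le_of_le_one_right (sq_nonneg _) (pow_le_one₀ (norm_nonneg _) (hu_norm j))
  · rw [finner_eq_sum_inner _ D (rightSingVec D), nuclearNorm, LinearEquiv.apply_symm_apply]
    refine Finset.sum_congr rfl fun i _ => ?_
    have hTi : T (rightSingVec D i) = u i := by
      simp [hT, OrthonormalBasis.inner_eq_ite]
    rw [ContinuousLinearMap.coe_coe, hTi, real_inner_smul_left, real_inner_self_eq_norm_sq,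
      ← singVal_eq_norm, sq, ← mul_assoc, inv_mul_mul_self]

end Duality

section Thresholding

variable {m n r : ℕ}

lemma finner_mul_diagonal_mul_transpose (G : Matrix (Fin m) (Fin n) ℝ)
    (U : Matrix (Fin m) (Fin r) ℝ) (V : Matrix (Fin n) (Fin r) ℝ) (b : Fin r → ℝ) :
    finner G (U * diagonal b * Vᵀ) = ∑ k, b k * (Uᵀ * G * V) k k := by
  rw [finner, ← Matrix.mul_assoc, trace_mul_comm, ← Matrix.mul_assoc, ← Matrix.mul_assoc,
    show Vᵀ * Gᵀ * U = (Uᵀ * G * V)ᵀ by simp only [transpose_mul, transpose_transpose,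
      Matrix.mul_assoc]]
  simp only [trace, diag, mul_diagonal]
  exact Finset.sum_congr rfl fun k _ => mul_comm _ _

variable {U : Matrix (Fin m) (Fin r) ℝ} {V : Matrix (Fin n) (Fin r) ℝ}

theorem opNorm_mul_diagonal_mul_transpose_le (hU : Uᵀ * U = 1) (hV : Vᵀ * V = 1)
    {a : Fin r → ℝ} {τ : ℝ} (hτ : 0 ≤ τ) (ha : ∀ i, |a i| ≤ τ) :
    opNorm (U * diagonal a * Vᵀ) ≤ τ :=
  (opNorm_mul_mul_le_of_opNorm_le_one _ (opNorm_le_one_of_transpose_mul_self hU)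
    (opNorm_transpose_le_one_of_transpose_mul_self hV)).trans (opNorm_diagonal_le hτ ha)

theorem finner_mul_diagonal_mul_transpose_le (G : Matrix (Fin m) (Fin n) ℝ) (hU : Uᵀ * U = 1)
    (hV : Vᵀ * V = 1) {b : Fin r → ℝ} (hb : ∀ k, 0 ≤ b k) :
    finner G (U * diagonal b * Vᵀ) ≤ opNorm G * ∑ k, b k := by
  rw [finner_mul_diagonal_mul_transpose, Finset.mul_sum]
  refine Finset.sum_le_sum fun k _ => ?_
  have hk : (Uᵀ * G * V) k k ≤ opNorm G :=
    (diag_le_opNorm _ k).trans (opNorm_mul_mul_le_of_opNorm_le_one _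
      (opNorm_transpose_le_one_of_transpose_mul_self hU) (opNorm_le_one_of_transpose_mul_self hV))
  rw [mul_comm (opNorm G)]
  exact mul_le_mul_of_nonneg_left hk (hb k)

theorem nuclearNorm_mul_diagonal_mul_transpose_le (hU : Uᵀ * U = 1) (hV : Vᵀ * V = 1)
    {b : Fin r → ℝ} (hb : ∀ k, 0 ≤ b k) : nuclearNorm (U * diagonal b * Vᵀ) ≤ ∑ k, b k := by
  obtain ⟨P, hP, hPD⟩ := exists_opNorm_le_one_finner_eq_nuclearNorm (U * diagonal b * Vᵀ)
  calc nuclearNorm (U * diagonal b * Vᵀ) = finner P (U * diagonal b * Vᵀ) := hPD.symm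
    _ ≤ opNorm P * ∑ k, b k := finner_mul_diagonal_mul_transpose_le P hU hV hb
    _ ≤ ∑ k, b k := mul_le_of_le_one_left (Finset.sum_nonneg fun k _ => hb k) hP

/-- `D_τ(Q)`, with `Q` given through its singular value decomposition `U * diagonal σ * Vᵀ`. -/
def singValThreshold (τ : ℝ) (U : Matrix (Fin m) (Fin r) ℝ) (σ : Fin r → ℝ)
    (V : Matrix (Fin n) (Fin r) ℝ) : Matrix (Fin m) (Fin n) ℝ :=
  U * diagonal (fun i => max (σ i - τ) 0) * Vᵀ

theorem isMinOn_singValThreshold {τ : ℝ} (hτ : 0 ≤ τ) (hU : Uᵀ * U = 1) (hV : Vᵀ * V = 1)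
    {σ : Fin r → ℝ} (hσ : ∀ i, 0 ≤ σ i) :
    IsMinOn (fun L => τ * nuclearNorm L + frobNorm (L - U * diagonal σ * Vᵀ) ^ 2 / 2) Set.univ
      (singValThreshold τ U σ V) := by
  intro L _
  set Q := U * diagonal σ * Vᵀ
  set D := singValThreshold τ U σ V
  set b : Fin r → ℝ := fun i => max (σ i - τ) 0
  set a : Fin r → ℝ := fun i => min τ (σ i)
  have hQD : Q - D = U * diagonal a * Vᵀ := by
    have hσb : (fun i => σ i - b i) = a := funext fun i => by
      rw [← min_sub_sub_left, sub_sub_cancel, sub_zero]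
    rw [show Q - D = U * diagonal σ * Vᵀ - U * diagonal b * Vᵀ from rfl, ← Matrix.sub_mul,
      ← Matrix.mul_sub, diagonal_sub, hσb]
  have ha (i : Fin r) : |a i| ≤ τ :=
    abs_le.mpr ⟨le_min (by linarith) (by linarith [hσ i]), min_le_left _ _⟩
  have hab (i : Fin r) : a i * b i = τ * b i := by
    rcases le_total (σ i) τ with h | h
    · simp [b, h]
    · simp [a, h]
  have hL : finner (Q - D) L ≤ τ * nuclearNorm L :=
    (finner_le_opNorm_mul_nuclearNorm _ _).trans (mul_le_mul_of_nonneg_right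
      (hQD ▸ opNorm_mul_diagonal_mul_transpose_le hU hV hτ ha) (nuclearNorm_nonneg L))
  have hD : τ * nuclearNorm D ≤ finner (Q - D) D := by
    have hUV : Uᵀ * (U * diagonal a * Vᵀ) * V = diagonal a := by
      simp only [Matrix.mul_assoc, hV, Matrix.mul_one, ← Matrix.mul_assoc Uᵀ, hU, Matrix.one_mul]
    rw [hQD, show D = U * diagonal b * Vᵀ from rfl, finner_mul_diagonal_mul_transpose, hUV]
    simp only [diagonal_apply_eq, mul_comm (b _), hab, ← Finset.mul_sum]
    exact mul_le_mul_of_nonneg_left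
      (nuclearNorm_mul_diagonal_mul_transpose_le hU hV fun i => le_max_right _ _) hτ
  have hsq := frobNorm_sub_sq L D Q
  show τ * nuclearNorm D + frobNorm (D - Q) ^ 2 / 2 ≤ τ * nuclearNorm L + frobNorm (L - Q) ^ 2 / 2
  linarith [sq_nonneg (frobNorm (L - D))]

end Thresholding

/-- D_{1/(μ(ν+1))}(Q) with Q = (1/(ν+1))(Z - S + νC - X) minimizes
(1/μ)‖L‖_* + (1/2)‖L + S - Z + X‖_F² + (ν/2)‖L - C‖_F². -/
theorem svt_minimizes_fused_objective {m n r : ℕ} (μ ν : ℝ) (hμ : 0 < μ) (hν : 0 ≤ ν)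
    (Z S C X : Matrix (Fin m) (Fin n) ℝ)
    (Q : Matrix (Fin m) (Fin n) ℝ) (hQdef : Q = (1 / (ν + 1)) • (Z - S + ν • C - X))
    (U : Matrix (Fin m) (Fin r) ℝ) (V : Matrix (Fin n) (Fin r) ℝ) (σ : Fin r → ℝ)
    (hU : Uᵀ * U = 1) (hV : Vᵀ * V = 1) (hσ : ∀ i, 0 ≤ σ i)
    (hQ : Q = U * Matrix.diagonal σ * Vᵀ)
    (D : Matrix (Fin m) (Fin n) ℝ)
    (hD : D = U * Matrix.diagonal (fun i => max (σ i - 1 / (μ * (ν + 1))) 0) * Vᵀ) :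
    ∀ L : Matrix (Fin m) (Fin n) ℝ,
      (1/μ) * nuclearNorm D + (1/2) * (frobNorm (D + S - Z + X))^2
          + (ν/2) * (frobNorm (D - C))^2
        ≤ (1/μ) * nuclearNorm L + (1/2) * (frobNorm (L + S - Z + X))^2
          + (ν/2) * (frobNorm (L - C))^2 := by
  intro L
  have hν1 : 0 < ν + 1 := by linarith
  set τ := 1 / (μ * (ν + 1))
  have hprox : τ * nuclearNorm D + frobNorm (D - Q) ^ 2 / 2
      ≤ τ * nuclearNorm L + frobNorm (L - Q) ^ 2 / 2 := by
    rw [hD, hQ]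
    exact isMinOn_singValThreshold (by positivity) hU hV hσ (Set.mem_univ L)
  have hQ' : (ν + 1) • Q = (Z - S - X) + ν • C := by
    rw [hQdef, smul_smul, mul_one_div_cancel hν1.ne', one_smul]
    abel
  have hτμ : 1 / μ = (ν + 1) * τ := by
    simp only [τ]
    field_simp
  have hA (M : Matrix (Fin m) (Fin n) ℝ) : M + S - Z + X = M - (Z - S - X) := by abel
  have hfD := frobNorm_sub_sq_add_mul_frobNorm_sub_sq hQ' D
  have hfL := frobNorm_sub_sq_add_mul_frobNorm_sub_sq hQ' L
  rw [hA, hA, hτμ]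
  linear_combination (ν + 1) * hprox + hfD / 2 - hfL / 2
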